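/- Let F be an algebraically closed field of characteristic zero, let L be a Lie algebra over F with a nontrivial finite-dimensional Cartan subalgebra H such that L = ⊕_{α∈R} L_α is the direct sum of its root spaces with L_0 = H, let N ≥ 3 be an integer, and let φ be an N-derivation of L of homogeneous degree 0 (i.e., φ(L_α) ⊆ L_α for every root α). If α is a nonzero root, x ∈ L_α is nonzero, and h ∈ H satisfies α(h) = 1, then α(φ(h)) = 0. -/
import Mathlib


open scoped BigOperators Classical

/-- Right-iterated Lie bracket `[x₁, x₂, …, xₖ] = [x₁, [x₂, [… [x_{k-1}, xₖ] …]]]`. -/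
def itBracket {L : Type*} [LieRing L] : List L → L
  | [] => 0
  | [a] => a
  | a :: b :: l => ⁅a, itBracket (b :: l)⁆

/-- `φ` is an `N`-derivation of the Lie algebra `L`:
`φ [x₁, …, x_N] = ∑ i, [x₁, …, x_{i-1}, φ xᵢ, x_{i+1}, …, x_N]`. -/
def IsNDeriv (F : Type*) {L : Type*} [CommRing F] [LieRing L] [LieAlgebra F L]
    (N : ℕ) (φ : L →ₗ[F] L) : Prop :=
  ∀ x : Fin N → L,
    φ (itBracket (List.ofFn x)) =
      ∑ i : Fin N, itBracket (List.ofFn (Function.update x i (φ (x i))))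

/-- The root space `L_α = { x ∈ L | [h, x] = α(h) • x for all h ∈ H }` attached to a linear
functional `α` on a Lie subalgebra `H` of `L`. -/
def rootSp (F : Type*) {L : Type*} [CommRing F] [LieRing L] [LieAlgebra F L]
    (H : LieSubalgebra F L) (α : Module.Dual F H) : Submodule F L where
  carrier := {x : L | ∀ h : H, ⁅(h : L), x⁆ = α h • x}
  add_mem' := by
    intro a b ha hb h
    rw [lie_add, ha h, hb h, smul_add]
  zero_mem' := by intro h; simp
  smul_mem' := by
    intro c a ha h
    rw [lie_smul, ha h, smul_comm]

def cSnoc {L : Type*} (c z : L) (n : ℕ) : Fin (n+1) → L := Fin.snoc (fun _ => c) z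

lemma cSnoc_castSucc {L : Type*} (c z : L) (n : ℕ) (j : Fin n) :
    cSnoc c z n (Fin.castSucc j) = c := by
  simp [cSnoc]

lemma cSnoc_last {L : Type*} (c z : L) (n : ℕ) :
    cSnoc c z n (Fin.last n) = z := by
  simp [cSnoc]

lemma cSnoc_zero {L : Type*} (c z : L) (n : ℕ) :
    cSnoc c z (n+1) 0 = c := by
  have : (0 : Fin (n+2)) = Fin.castSucc 0 := rfl
  rw [this, cSnoc_castSucc]

lemma cSnoc_comp_succ {L : Type*} (c z : L) (n : ℕ) :
    (fun i : Fin (n+1) => cSnoc c z (n+1) i.succ) = cSnoc c z n := by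
  funext i
  refine Fin.lastCases ?_ ?_ i
  · rw [Fin.succ_last, cSnoc_last, cSnoc_last]
  · intro j
    rw [Fin.succ_castSucc, cSnoc_castSucc, cSnoc_castSucc]

lemma cSnoc_update_last {L : Type*} (c z w : L) (n : ℕ) :
    Function.update (cSnoc c z n) (Fin.last n) w = cSnoc c w n := by
  funext i
  refine Fin.lastCases ?_ ?_ i
  · rw [Function.update_self, cSnoc_last]
  · intro j
    rw [Function.update_of_ne (Fin.castSucc_lt_last j).ne, cSnoc_castSucc, cSnoc_castSucc]

lemma itBracket_cons {L : Type*} [LieRing L] (a : L) (l : List L) (hl : l ≠ []) :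
    itBracket (a :: l) = ⁅a, itBracket l⁆ := by
  cases l with
  | nil => exact absurd rfl hl
  | cons b t => rfl

lemma itBracket_cSnoc {L : Type*} [LieRing L] (c w : L) (hcw : ⁅c, w⁆ = w) :
    ∀ n : ℕ, itBracket (List.ofFn (cSnoc c w n)) = w := by
  intro n
  induction n with
  | zero =>
    have : List.ofFn (cSnoc c w 0) = [w] := by
      rw [List.ofFn_succ, List.ofFn_zero, show (0 : Fin 1) = Fin.last 0 from rfl, cSnoc_last]
    rw [this]; rfl
  | succ n ih =>
    rw [List.ofFn_succ, itBracket_cons _ _ (by simp), cSnoc_zero, cSnoc_comp_succ, ih, hcw]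

lemma itBracket_updateConst {L : Type*} [LieRing L] (c b z : L) (hcz : ⁅c, z⁆ = z)
    (hcb : ⁅c, ⁅b, z⁆⁆ = ⁅b, z⁆) :
    ∀ n : ℕ, ∀ j : Fin (n+1),
      itBracket (List.ofFn (Function.update (cSnoc c z (n+1)) j.castSucc b)) = ⁅b, z⁆ := by
  intro n
  induction n with
  | zero =>
    intro j
    have hj : j = 0 := Fin.fin_one_eq_zero j
    subst hj
    have e0 : Function.update (cSnoc c z 1) (Fin.castSucc 0) b 0 = b := by
      rw [show (Fin.castSucc (0 : Fin 1)) = 0 from rfl, Function.update_self]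
    have e1 : Function.update (cSnoc c z 1) (Fin.castSucc 0) b (0 : Fin 1).succ = z := by
      rw [Function.update_of_ne (by decide), show ((0 : Fin 1).succ) = Fin.last 1 from rfl,
        cSnoc_last]
    rw [List.ofFn_succ, List.ofFn_succ, List.ofFn_zero, e0, e1]; rfl
  | succ n ih =>
    intro j
    rw [List.ofFn_succ, itBracket_cons _ _ (by simp)]
    refine Fin.cases ?_ ?_ j
    · have h0 : Function.update (cSnoc c z (n+2)) (Fin.castSucc 0) b 0 = b := by
        rw [show (Fin.castSucc (0 : Fin (n+2))) = 0 from rfl, Function.update_self]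
      have h1 : (fun i : Fin (n+2) =>
            Function.update (cSnoc c z (n+2)) (Fin.castSucc 0) b i.succ)
          = cSnoc c z (n+1) := by
        funext i
        rw [Function.update_of_ne (by
          rw [show (Fin.castSucc (0 : Fin (n+2))) = 0 from rfl]; exact Fin.succ_ne_zero i)]
        exact congrFun (cSnoc_comp_succ c z (n+1)) i
      rw [h0, h1, itBracket_cSnoc c z hcz (n+1)]
    · intro k
      have h0 : Function.update (cSnoc c z (n+2)) (Fin.castSucc k.succ) b 0 = c := by
        rw [Function.update_of_ne (by
          intro hc
          rw [← Fin.succ_castSucc] at hc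
          exact Fin.succ_ne_zero _ hc.symm), cSnoc_zero]
      have h1 : (fun i : Fin (n+2) =>
            Function.update (cSnoc c z (n+2)) (Fin.castSucc k.succ) b i.succ)
          = Function.update (cSnoc c z (n+1)) (Fin.castSucc k) b := by
        funext i
        rw [Function.update_apply, Function.update_apply]
        have heq : (i.succ = Fin.castSucc k.succ) ↔ (i = Fin.castSucc k) := by
          rw [← Fin.succ_castSucc]; exact Fin.succ_inj
        by_cases hik : i = Fin.castSucc k
        · rw [if_pos (heq.mpr hik), if_pos hik]
        · rw [if_neg (fun hc => hik (heq.mp hc)), if_neg hik]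
          exact congrFun (cSnoc_comp_succ c z (n+1)) i
      rw [h0, h1, ih k, hcb]

/-- Let `L` be a Lie algebra over an algebraically closed field of characteristic zero, graded
by a nontrivial finite-dimensional Cartan subalgebra `H` (so `L = ⊕_α L_α` with `L_0 = H`),
let `N ≥ 3`, and let `φ` be an `N`-derivation of `L` of homogeneous degree `0`.  If `α` is a
nonzero root, `x ∈ L_α` is nonzero, and `h ∈ H` satisfies `α h = 1`, then `φ h ∈ H` and
`α (φ h) = 0`. -/
theorem nDeriv_degZero_apply_root_eq_zero (F L : Type*) [Field F] [IsAlgClosed F] [CharZero F] [LieRing L] [LieAlgebra F L]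
    (H : LieSubalgebra F L) [H.IsCartanSubalgebra] [FiniteDimensional F H] (hH : H ≠ ⊥)
    (hdec : DirectSum.IsInternal (fun α : Module.Dual F H => rootSp F H α))
    (hzero : rootSp F H (0 : Module.Dual F H) = H.toSubmodule)
    (N : ℕ) (hN : 3 ≤ N) (φ : L →ₗ[F] L) (hφ : IsNDeriv F N φ)
    (hdeg : ∀ α : Module.Dual F H, ∀ x ∈ rootSp F H α, φ x ∈ rootSp F H α)
    (α : Module.Dual F H) (hα : α ≠ 0)
    (x : L) (hx : x ∈ rootSp F H α) (hx0 : x ≠ 0)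
    (h : H) (hh : α h = 1) :
    ∃ hm : φ (h : L) ∈ H.toSubmodule, α ⟨φ (h : L), hm⟩ = 0 := by
  -- φ h ∈ H since h ∈ L₀ = H and φ preserves root spaces
  have hh0 : (h : L) ∈ rootSp F H (0 : Module.Dual F H) := by
    rw [hzero]; exact h.2
  have hm : φ (h : L) ∈ H.toSubmodule := by
    rw [← hzero]; exact hdeg 0 _ hh0
  refine ⟨hm, ?_⟩
  set γ : F := α ⟨φ (h : L), hm⟩ with hγdef
  obtain ⟨m, rfl⟩ : ∃ m, N = m + 3 := ⟨N - 3, by omega⟩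
  -- basic bracket facts
  have hcz : ⁅(h : L), x⁆ = x := by rw [hx h, hh, one_smul]
  have hbz : ⁅φ (h : L), x⁆ = γ • x := hx ⟨φ (h : L), hm⟩
  have hcb : ⁅(h : L), ⁅φ (h : L), x⁆⁆ = ⁅φ (h : L), x⁆ := by
    rw [hbz, lie_smul, hcz]
  have hφx : φ x ∈ rootSp F H α := hdeg α x hx
  have hcφx : ⁅(h : L), φ x⁆ = φ x := by rw [hφx h, hh, one_smul]
  -- apply the N-derivation identity to (h, …, h, x)
  have key := hφ (cSnoc (h : L) x (m+2))
  rw [itBracket_cSnoc _ _ hcz] at key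
  rw [Fin.sum_univ_castSucc] at key
  -- the last summand
  have hlast : itBracket (List.ofFn (Function.update (cSnoc (h : L) x (m+2))
      (Fin.last (m+2)) (φ (cSnoc (h : L) x (m+2) (Fin.last (m+2)))))) = φ x := by
    rw [cSnoc_last, cSnoc_update_last, itBracket_cSnoc _ _ hcφx]
  -- the other summands
  have hcs : ∀ j : Fin (m+2), itBracket (List.ofFn (Function.update (cSnoc (h : L) x (m+2))
      (Fin.castSucc j) (φ (cSnoc (h : L) x (m+2) (Fin.castSucc j))))) = γ • x := by
    intro j
    rw [cSnoc_castSucc, itBracket_updateConst _ _ _ hcz hcb (m+1) j, hbz]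
  rw [hlast, Finset.sum_congr rfl (fun j _ => hcs j), Finset.sum_const, Finset.card_univ,
    Fintype.card_fin] at key
  have hz : ((m+2 : ℕ) : F) * γ = 0 := by
    have h0 : ((m+2) • (γ • x)) = 0 := by
      have := key
      nth_rewrite 1 [show φ x = 0 + φ x by rw [zero_add]] at this
      exact (add_right_cancel this).symm
    rw [← Nat.cast_smul_eq_nsmul F, smul_smul] at h0
    rcases smul_eq_zero.mp h0 with h1 | h1
    · exact h1
    · exact absurd h1 hx0
  have hne : ((m+2 : ℕ) : F) ≠ 0 := Nat.cast_ne_zero.mpr (by omega)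
  exact (mul_eq_zero.mp hz).resolve_left hne
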